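/- In the sparse regime, the extremes test is asymptotically powerful above its own boundary: if ε_n = n^{-β} with β ∈ (0,1) fixed and ρ_n = 1 − n^{-γ} with γ > 0 fixed such that γ > 2β, then there exists a sequence of thresholds (t_n) such that the test rejecting when min_{1≤i≤n} |U_i| ≤ t_n, where U_i := (X_i − Y_i)/√2, is asymptotically powerful. -/
import Mathlib


open MeasureTheory ProbabilityTheory Real Filter Topology

noncomputable section

/-- The standard normal distribution on ℝ. -/
def stdGauss : Measure ℝ := gaussianReal 0 1

/-- Two independent standard normals. -/
def stdGauss2 : Measure (ℝ × ℝ) := stdGauss.prod stdGauss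

/-- `N(0, Σ_ρ)`: the centered bivariate normal with unit marginal variances and
correlation `ρ`, i.e. the law of `(Z₁, ρ Z₁ + √(1-ρ²) Z₂)` for independent standard
normal `Z₁, Z₂`. -/
def biNormal (ρ : ℝ) : Measure (ℝ × ℝ) :=
  stdGauss2.map fun z => (z.1, ρ * z.1 + Real.sqrt (1 - ρ ^ 2) * z.2)

/-- The contamination mixture `P_{ε,ρ} = (1-ε) N(0,Σ₀) + ε N(0,Σ_ρ)`. -/
def mixture (ε ρ : ℝ) : Measure (ℝ × ℝ) :=
  ENNReal.ofReal (1 - ε) • biNormal 0 + ENNReal.ofReal ε • biNormal ρ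

/-- The `n`-fold product (i.i.d.) measure. -/
def iid (n : ℕ) (μ : Measure (ℝ × ℝ)) : Measure (Fin n → ℝ × ℝ) :=
  Measure.pi fun _ => μ
/-- The pairwise differences `Uᵢ = (Xᵢ - Yᵢ)/√2`. -/
def pairDiff (n : ℕ) (x : Fin n → ℝ × ℝ) (i : Fin n) : ℝ :=
  ((x i).1 - (x i).2) / Real.sqrt 2

/-- The rejection region of the extremes test: `min_{1 ≤ i ≤ n} |Uᵢ| ≤ t`
(equivalently, some `|Uᵢ| ≤ t`). -/
def extremesReject (n : ℕ) (t : ℝ) : Set (Fin n → ℝ × ℝ) :=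
  {x | ∃ i : Fin n, |pairDiff n x i| ≤ t}

lemma stdGauss_pdf_le (x : ℝ) : gaussianPDFReal 0 1 x ≤ 1/2 := by
  rw [gaussianPDFReal]
  have h2 : (2:ℝ) ≤ Real.sqrt (2 * π * (1:NNReal)) := by
    rw [show ((1:NNReal):ℝ) = 1 by norm_num, mul_one]
    have : (4:ℝ) ≤ 2 * π := by nlinarith [Real.pi_gt_three]
    nlinarith [Real.sq_sqrt (by linarith : (0:ℝ) ≤ 2*π), Real.sqrt_nonneg (2*π)]
  have he : Real.exp (-(x - 0)^2 / (2 * (1:NNReal))) ≤ 1 := by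
    rw [Real.exp_le_one_iff]
    have : (0:ℝ) ≤ (x-0)^2 := sq_nonneg _
    have : ((2:ℝ) * (1:NNReal)) = 2 := by norm_num
    rw [this]
    nlinarith
  calc (√(2 * π * (1:NNReal)))⁻¹ * rexp (-(x - 0) ^ 2 / (2 * (1:NNReal)))
      ≤ (√(2 * π * (1:NNReal)))⁻¹ * 1 := by
        apply mul_le_mul_of_nonneg_left he (by positivity)
    _ ≤ 1/2 := by
        rw [mul_one]
        rw [inv_le_comm₀ (by linarith) (by norm_num)] <;> linarith

lemma stdGauss_pdf_ge {x : ℝ} (h0 : 0 ≤ x) (h2 : x ≤ 2) : 1/25 ≤ gaussianPDFReal 0 1 x := by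
  rw [gaussianPDFReal]
  have hs : Real.sqrt (2 * π * (1:NNReal)) ≤ 3 := by
    rw [show ((1:NNReal):ℝ) = 1 by norm_num, mul_one]
    rw [show (3:ℝ) = Real.sqrt (3^2) by rw [Real.sqrt_sq]; norm_num]
    exact Real.sqrt_le_sqrt (by nlinarith [Real.pi_lt_d2])
  have hsp : 0 < Real.sqrt (2 * π * (1:NNReal)) := by
    apply Real.sqrt_pos.2; positivity
  have he : Real.exp (-2) ≤ rexp (-(x - 0)^2 / (2 * (1:NNReal))) := by
    apply Real.exp_le_exp.2
    have : ((2:ℝ) * (1:NNReal)) = 2 := by norm_num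
    rw [this]
    nlinarith
  have he2 : (3:ℝ)/25 ≤ Real.exp (-2) := by
    rw [Real.exp_neg, le_inv_comm₀ (by norm_num) (Real.exp_pos 2)]
    have h22 : Real.exp 2 = (Real.exp 1)^2 := by
      rw [← Real.exp_nat_mul]; norm_num
    nlinarith [Real.exp_one_lt_d9, Real.exp_pos 1, h22]
  calc (1:ℝ)/25 = (1/3) * (3/25) := by norm_num
    _ ≤ (√(2 * π * (1:NNReal)))⁻¹ * rexp (-(x - 0) ^ 2 / (2 * (1:NNReal))) := by
        apply mul_le_mul
        · rw [le_inv_comm₀ (by norm_num) hsp]; linarith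
        · linarith
        · norm_num
        · positivity

def Aset (t : ℝ) : Set (ℝ × ℝ) := {p : ℝ × ℝ | |(p.1 - p.2) / Real.sqrt 2| ≤ t}

lemma measurableSet_Aset (t : ℝ) : MeasurableSet (Aset t) := by
  apply measurableSet_le _ measurable_const
  fun_prop

instance : IsProbabilityMeasure stdGauss := by rw [stdGauss]; infer_instance
instance : IsProbabilityMeasure stdGauss2 := by rw [stdGauss2]; infer_instance

lemma measurable_biMap (ρ : ℝ) :
    Measurable (fun z : ℝ × ℝ => (z.1, ρ * z.1 + Real.sqrt (1 - ρ ^ 2) * z.2)) := by fun_prop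

instance (ρ : ℝ) : IsProbabilityMeasure (biNormal ρ) := by
  rw [biNormal]; exact Measure.isProbabilityMeasure_map (measurable_biMap ρ).aemeasurable

lemma mixture_prob {ε : ℝ} (h0 : 0 ≤ ε) (h1 : ε ≤ 1) (ρ : ℝ) :
    IsProbabilityMeasure (mixture ε ρ) := by
  constructor
  rw [mixture]
  simp only [Measure.add_apply, Measure.smul_apply, smul_eq_mul, measure_univ, mul_one]
  rw [← ENNReal.ofReal_add (by linarith) h0]
  norm_num

lemma biNormal_zero : biNormal 0 = stdGauss2 := by
  rw [biNormal]
  have : (fun z : ℝ × ℝ => (z.1, 0 * z.1 + Real.sqrt (1 - 0 ^ 2) * z.2)) = id := by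
    funext z; simp
  rw [this, Measure.map_id]

lemma reject_compl (n : ℕ) (t : ℝ) :
    (extremesReject n t)ᶜ = Set.pi Set.univ (fun _ : Fin n => (Aset t)ᶜ) := by
  ext x
  simp [extremesReject, pairDiff, Aset, Set.mem_pi]

instance iid_prob (n : ℕ) (μ : Measure (ℝ × ℝ)) [IsProbabilityMeasure μ] :
    IsProbabilityMeasure (iid n μ) :=
  show IsProbabilityMeasure (Measure.pi _) from inferInstance

lemma iid_reject (n : ℕ) (t : ℝ) (μ : Measure (ℝ × ℝ)) [IsProbabilityMeasure μ] :
    ((iid n μ) (extremesReject n t)).toReal = 1 - (1 - (μ (Aset t)).toReal)^n := by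
  have hc : MeasurableSet ((extremesReject n t)ᶜ) := by
    rw [reject_compl]
    exact MeasurableSet.univ_pi (fun _ => (measurableSet_Aset t).compl)
  have h1 : (iid n μ) ((extremesReject n t)ᶜ) = (μ ((Aset t)ᶜ))^n := by
    rw [reject_compl, iid, Measure.pi_pi]
    simp
  have h2 : (iid n μ) (extremesReject n t) = 1 - (iid n μ) ((extremesReject n t)ᶜ) := by
    have h := prob_compl_eq_one_sub (μ := iid n μ) hc
    rwa [compl_compl] at h
  rw [h2, h1]
  have hAc : μ ((Aset t)ᶜ) = 1 - μ (Aset t) := prob_compl_eq_one_sub (measurableSet_Aset t)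
  have hle : μ (Aset t) ≤ 1 := prob_le_one
  have hfin : μ (Aset t) ≠ ⊤ := (lt_of_le_of_lt hle ENNReal.one_lt_top).ne
  rw [hAc]
  rw [ENNReal.toReal_sub_of_le (pow_le_one' (by simp [tsub_le_iff_right]) n) ENNReal.one_ne_top]
  rw [ENNReal.toReal_pow, ENNReal.toReal_sub_of_le hle ENNReal.one_ne_top]
  simp

lemma gauss_ball_le (a h : ℝ) (h0 : 0 ≤ h) :
    stdGauss {x | |x - a| ≤ h} ≤ ENNReal.ofReal h := by
  rw [stdGauss, gaussianReal_apply 0 one_ne_zero]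
  have hset : {x : ℝ | |x - a| ≤ h} = Metric.closedBall a h := by
    ext x; simp [Metric.mem_closedBall, Real.dist_eq]
  calc ∫⁻ x in {x : ℝ | |x - a| ≤ h}, gaussianPDF 0 1 x
      ≤ ∫⁻ _ in {x : ℝ | |x - a| ≤ h}, ENNReal.ofReal (1/2) := by
        apply lintegral_mono
        intro x
        exact ENNReal.ofReal_le_ofReal (stdGauss_pdf_le x)
    _ = ENNReal.ofReal (1/2) * volume {x : ℝ | |x - a| ≤ h} := by
        rw [setLIntegral_const]
    _ ≤ ENNReal.ofReal (1/2) * ENNReal.ofReal (2*h) := by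
        gcongr
        rw [hset, Real.volume_closedBall]
    _ = ENNReal.ofReal h := by
        rw [← ENNReal.ofReal_mul (by norm_num)]
        congr 1; ring

lemma gauss_ball_ge (m L : ℝ) (hm0 : 0 ≤ m) (hm1 : m ≤ 1) (hL0 : 0 ≤ L) (hL1 : L ≤ 1) :
    ENNReal.ofReal (L/25) ≤ stdGauss {x | |x - m| ≤ L} := by
  rw [stdGauss, gaussianReal_apply 0 one_ne_zero]
  have hsub : Set.Icc m (m+L) ⊆ {x : ℝ | |x - m| ≤ L} := by
    intro x hx
    simp only [Set.mem_Icc] at hx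
    simp only [Set.mem_setOf_eq, abs_le]
    constructor <;> linarith [hx.1, hx.2]
  calc ENNReal.ofReal (L/25) = ENNReal.ofReal (1/25) * volume (Set.Icc m (m+L)) := by
        rw [Real.volume_Icc, ← ENNReal.ofReal_mul (by norm_num)]
        ring_nf
    _ = ∫⁻ _ in Set.Icc m (m+L), ENNReal.ofReal (1/25) := by rw [setLIntegral_const]
    _ ≤ ∫⁻ x in Set.Icc m (m+L), gaussianPDF 0 1 x := by
        apply setLIntegral_mono' measurableSet_Icc
        intro x hx
        simp only [Set.mem_Icc] at hx
        exact ENNReal.ofReal_le_ofReal (stdGauss_pdf_ge (by linarith [hx.1]) (by linarith [hx.2]))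
    _ ≤ ∫⁻ x in {x : ℝ | |x - m| ≤ L}, gaussianPDF 0 1 x := by
        apply lintegral_mono_set hsub

lemma sqrt2_pos : (0:ℝ) < Real.sqrt 2 := by positivity

lemma q0_le (t : ℝ) (ht : 0 ≤ t) : biNormal 0 (Aset t) ≤ ENNReal.ofReal (2*t) := by
  rw [biNormal_zero, stdGauss2, Measure.prod_apply (measurableSet_Aset t)]
  have key : ∀ z1 : ℝ, stdGauss (Prod.mk z1 ⁻¹' Aset t) ≤ ENNReal.ofReal (2*t) := by
    intro z1
    have hset : Prod.mk z1 ⁻¹' Aset t = {z2 : ℝ | |z2 - z1| ≤ Real.sqrt 2 * t} := by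
      ext z2
      simp only [Set.mem_preimage, Aset, Set.mem_setOf_eq, abs_div, abs_of_pos sqrt2_pos]
      rw [div_le_iff₀ sqrt2_pos, abs_sub_comm, mul_comm]
    rw [hset]
    have hs2 : Real.sqrt 2 ≤ 2 := by
      nlinarith [Real.sq_sqrt (by norm_num : (0:ℝ) ≤ 2), Real.sqrt_nonneg 2]
    exact (gauss_ball_le z1 _ (by positivity)).trans
      (ENNReal.ofReal_le_ofReal (by nlinarith))
  calc ∫⁻ z1, stdGauss (Prod.mk z1 ⁻¹' Aset t) ∂stdGauss
      ≤ ∫⁻ _, ENNReal.ofReal (2*t) ∂stdGauss := lintegral_mono key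
    _ = ENNReal.ofReal (2*t) := by rw [lintegral_const, measure_univ, mul_one]

lemma q1_ge (ρ t : ℝ) (hρ0 : 0 ≤ ρ) (hρ1 : ρ < 1) (ht : 0 ≤ t) :
    ENNReal.ofReal (min (t / Real.sqrt (1 - ρ)) 1 / 1250) ≤ biNormal ρ (Aset t) := by
  set s : ℝ := Real.sqrt (1 - ρ ^ 2) with hs_def
  have hs2 : s ^ 2 = 1 - ρ ^ 2 := Real.sq_sqrt (by nlinarith)
  have hs : 0 < s := Real.sqrt_pos.2 (by nlinarith)
  set L : ℝ := min (Real.sqrt 2 * t / s) 1 with hL_def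
  have hL0 : 0 ≤ L := le_min (by positivity) one_pos.le
  have hL1 : L ≤ 1 := min_le_right _ _
  have hmono : min (t / Real.sqrt (1 - ρ)) 1 ≤ L := by
    apply min_le_min _ le_rfl
    rw [div_le_div_iff₀ (Real.sqrt_pos.2 (by linarith)) hs]
    have h1 : s ≤ Real.sqrt 2 * Real.sqrt (1 - ρ) := by
      rw [← Real.sqrt_mul (by norm_num)]
      apply Real.sqrt_le_sqrt
      nlinarith
    nlinarith [Real.sqrt_nonneg (1-ρ), Real.sqrt_nonneg 2]
  rw [biNormal, Measure.map_apply (measurable_biMap ρ) (measurableSet_Aset t)]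
  set B : Set (ℝ × ℝ) := (fun z : ℝ × ℝ => (z.1, ρ * z.1 + s * z.2)) ⁻¹' Aset t with hB_def
  have hBmeas : MeasurableSet B := (measurable_biMap ρ) (measurableSet_Aset t)
  have key : ∀ z1 ∈ {x : ℝ | |x - (1/2:ℝ)| ≤ (1/2:ℝ)},
      ENNReal.ofReal (L/25) ≤ stdGauss (Prod.mk z1 ⁻¹' B) := by
    intro z1 hz1
    simp only [Set.mem_setOf_eq, abs_le] at hz1
    have hz10 : 0 ≤ z1 := by linarith [hz1.1]
    have hz11 : z1 ≤ 1 := by linarith [hz1.2]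
    set m : ℝ := (1 - ρ) * z1 / s with hm_def
    have hm0 : 0 ≤ m := div_nonneg (mul_nonneg (by linarith) hz10) hs.le
    have hm1 : m ≤ 1 := by
      rw [hm_def, div_le_one hs]
      have h1ρ : 1 - ρ ≤ s := by
        nlinarith [Real.sqrt_nonneg (1 - ρ^2)]
      nlinarith
    have hsub : {z2 : ℝ | |z2 - m| ≤ L} ⊆ Prod.mk z1 ⁻¹' B := by
      intro z2 hz2
      simp only [Set.mem_setOf_eq] at hz2
      simp only [hB_def, Set.mem_preimage, Aset, Set.mem_setOf_eq]
      have h1 : z1 - (ρ * z1 + s * z2) = -(s * (z2 - m)) := by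
        rw [hm_def]; field_simp; ring
      rw [abs_div, abs_of_pos sqrt2_pos, div_le_iff₀ sqrt2_pos, h1, abs_neg, abs_mul,
        abs_of_pos hs]
      have h2 : s * |z2 - m| ≤ s * L := by nlinarith
      have h3 : s * L ≤ Real.sqrt 2 * t := by
        have h4 : L ≤ Real.sqrt 2 * t / s := min_le_left _ _
        have h5 : s * (Real.sqrt 2 * t / s) = Real.sqrt 2 * t := by field_simp
        nlinarith
      nlinarith
    exact le_trans (gauss_ball_ge m L hm0 hm1 hL0 hL1) (measure_mono hsub)
  calc ENNReal.ofReal (min (t / Real.sqrt (1 - ρ)) 1 / 1250)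
      ≤ ENNReal.ofReal (L/25 * (1/50)) := by
        apply ENNReal.ofReal_le_ofReal; nlinarith
    _ = ENNReal.ofReal (L/25) * ENNReal.ofReal ((1/2:ℝ)/25) := by
        rw [← ENNReal.ofReal_mul (by positivity)]; norm_num
    _ ≤ ENNReal.ofReal (L/25) * stdGauss {x : ℝ | |x - (1/2:ℝ)| ≤ (1/2:ℝ)} := by
        gcongr
        exact gauss_ball_ge (1/2) (1/2) (by norm_num) (by norm_num) (by norm_num) (by norm_num)
    _ = ∫⁻ _ in {x : ℝ | |x - (1/2:ℝ)| ≤ (1/2:ℝ)}, ENNReal.ofReal (L/25) ∂stdGauss := by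
        rw [setLIntegral_const, mul_comm]
    _ ≤ ∫⁻ z1 in {x : ℝ | |x - (1/2:ℝ)| ≤ (1/2:ℝ)}, stdGauss (Prod.mk z1 ⁻¹' B) ∂stdGauss := by
        apply setLIntegral_mono' (by apply measurableSet_le <;> fun_prop) key
    _ ≤ ∫⁻ z1, stdGauss (Prod.mk z1 ⁻¹' B) ∂stdGauss := setLIntegral_le_lintegral _ _
    _ = stdGauss2 B := (Measure.prod_apply hBmeas).symm

/-- in the sparse regime with `γ > 2β`, there are thresholds `(tₙ)` making
the extremes test asymptotically powerful. -/
theorem extremes_powerful (β γ : ℝ) (hβ0 : 0 < β) (hβ1 : β < 1) (hγ : 2 * β < γ)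
    (ε ρ : ℕ → ℝ) (hε : ∀ n : ℕ, ε n = (n : ℝ) ^ (-β))
    (hρ : ∀ n : ℕ, ρ n = 1 - (n : ℝ) ^ (-γ)) :
    ∃ t : ℕ → ℝ,
      Tendsto (fun n =>
        ((iid n (biNormal 0)) (extremesReject n (t n))).toReal
          + (1 - ((iid n (mixture (ε n) (ρ n))) (extremesReject n (t n))).toReal))
        atTop (𝓝 0) := by
  set c : ℝ := 1 + (γ - 2*β)/4 with hc_def
  have hc1 : 1 < c := by rw [hc_def]; linarith
  set δ : ℝ := min (1-β) ((γ - 2*β)/4) with hδ_def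
  have hδ : 0 < δ := lt_min (by linarith) (by linarith)
  refine ⟨fun n => (n:ℝ) ^ (-c), ?_⟩
  -- ε n ∈ [0,1]
  have hε01 : ∀ n : ℕ, 0 ≤ ε n ∧ ε n ≤ 1 := by
    intro n
    rw [hε n]
    rcases Nat.eq_zero_or_pos n with h | h
    · subst h
      rw [Nat.cast_zero, Real.zero_rpow (by linarith : -β ≠ 0)]
      norm_num
    · have hn1 : (1:ℝ) ≤ n := by exact_mod_cast h
      exact ⟨Real.rpow_nonneg (by linarith) _,
        Real.rpow_le_one_of_one_le_of_nonpos hn1 (by linarith)⟩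
  haveI hmixI : ∀ n : ℕ, IsProbabilityMeasure (mixture (ε n) (ρ n)) := fun n =>
    mixture_prob (hε01 n).1 (hε01 n).2 _
  set q0 : ℕ → ℝ := fun n => (biNormal 0 (Aset ((n:ℝ) ^ (-c)))).toReal with hq0_def
  set q : ℕ → ℝ := fun n => (mixture (ε n) (ρ n) (Aset ((n:ℝ) ^ (-c)))).toReal with hq_def
  have hfeq : (fun n =>
        ((iid n (biNormal 0)) (extremesReject n ((n:ℝ) ^ (-c)))).toReal
          + (1 - ((iid n (mixture (ε n) (ρ n))) (extremesReject n ((n:ℝ) ^ (-c)))).toReal))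
      = fun n => (1 - (1 - q0 n)^n) + (1 - q n)^n := by
    funext n
    haveI := hmixI n
    rw [iid_reject, iid_reject]
    ring
  rw [hfeq]
  -- squeeze
  have hg : Tendsto (fun n : ℕ => 2*(n:ℝ)^(1-c) + Real.exp (-((n:ℝ)^δ/1250)))
      atTop (𝓝 0) := by
    have hA : Tendsto (fun n : ℕ => 2*(n:ℝ)^(1-c)) atTop (𝓝 0) := by
      have h1 : Tendsto (fun x : ℝ => x ^ (-(c-1))) atTop (𝓝 0) :=
        tendsto_rpow_neg_atTop (by linarith)
      have h2 : Tendsto (fun n : ℕ => (n:ℝ)^(1-c)) atTop (𝓝 0) := by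
        have h3 := h1.comp (tendsto_natCast_atTop_atTop (R := ℝ))
        have heq : (fun n : ℕ => (n:ℝ)^(1-c)) = (fun x : ℝ => x ^ (-(c-1))) ∘ Nat.cast := by
          funext n; simp only [Function.comp_apply]; congr 1; ring
        rw [heq]; exact h3
      have := h2.const_mul (2:ℝ)
      simpa using this
    have hB : Tendsto (fun n : ℕ => Real.exp (-((n:ℝ)^δ/1250))) atTop (𝓝 0) := by
      apply Real.tendsto_exp_atBot.comp
      apply Filter.tendsto_neg_atTop_atBot.comp
      apply Tendsto.atTop_div_const (by norm_num : (0:ℝ) < 1250)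
      exact (tendsto_rpow_atTop hδ).comp tendsto_natCast_atTop_atTop
    have := hA.add hB
    simpa using this
  apply tendsto_of_tendsto_of_tendsto_of_le_of_le' tendsto_const_nhds hg
  · -- lower bound 0 ≤ f n, eventually
    filter_upwards [eventually_ge_atTop 1] with n hn
    have hq0mem : 0 ≤ q0 n ∧ q0 n ≤ 1 := by
      constructor
      · exact ENNReal.toReal_nonneg
      · exact ENNReal.toReal_le_of_le_ofReal one_pos.le (by simpa using prob_le_one)
    have hqmem : 0 ≤ q n ∧ q n ≤ 1 := by
      haveI := hmixI n
      constructor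
      · exact ENNReal.toReal_nonneg
      · exact ENNReal.toReal_le_of_le_ofReal one_pos.le (by simpa using prob_le_one)
    have h1 : (1 - q0 n)^n ≤ 1 := pow_le_one₀ (by linarith [hq0mem.2]) (by linarith [hq0mem.1])
    have h2 : 0 ≤ (1 - q n)^n := pow_nonneg (by linarith [hqmem.2]) n
    linarith
  · -- upper bound
    filter_upwards [eventually_ge_atTop 1] with n hn
    have hn1 : (1:ℝ) ≤ (n:ℝ) := by exact_mod_cast hn
    have hn0 : (0:ℝ) < (n:ℝ) := by linarith
    have htpos : (0:ℝ) ≤ (n:ℝ) ^ (-c) := Real.rpow_nonneg hn0.le _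
    haveI := hmixI n
    -- q0 bounds
    have hq00 : 0 ≤ q0 n := ENNReal.toReal_nonneg
    have hq01 : q0 n ≤ 1 :=
      ENNReal.toReal_le_of_le_ofReal one_pos.le (by simpa using prob_le_one)
    have hq0le : q0 n ≤ 2 * (n:ℝ)^(-c) :=
      ENNReal.toReal_le_of_le_ofReal (by positivity) (q0_le _ htpos)
    -- first term
    have hterm1 : 1 - (1 - q0 n)^n ≤ 2*(n:ℝ)^(1-c) := by
      have hber := one_add_mul_le_pow (by linarith : (-2:ℝ) ≤ -q0 n) n
      have heq : (1 + -q0 n : ℝ) = 1 - q0 n := by ring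
      rw [heq] at hber
      have hnq : (n:ℝ) * q0 n ≤ 2*(n:ℝ)^(1-c) := by
        have hr : (n:ℝ)^(1-c) = (n:ℝ) * (n:ℝ)^(-c) := by
          rw [show (1-c : ℝ) = 1 + (-c) by ring, Real.rpow_add hn0, Real.rpow_one]
        rw [hr]
        nlinarith
      nlinarith
    -- q lower bound
    have hρ0 : 0 ≤ ρ n := by
      rw [hρ n]
      have : (n:ℝ)^(-γ) ≤ 1 :=
        Real.rpow_le_one_of_one_le_of_nonpos hn1 (by linarith)
      linarith
    have hρ1 : ρ n < 1 := by
      rw [hρ n]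
      have : 0 < (n:ℝ)^(-γ) := Real.rpow_pos_of_pos hn0 _
      linarith
    have hsqrt : Real.sqrt (1 - ρ n) = (n:ℝ)^(-(γ/2)) := by
      rw [hρ n]
      have : (1 - (1 - (n:ℝ)^(-γ))) = (n:ℝ)^(-γ) := by ring
      rw [this, Real.sqrt_eq_rpow, ← Real.rpow_mul hn0.le]
      congr 1; ring
    have hdiv : (n:ℝ)^(-c) / Real.sqrt (1 - ρ n) = (n:ℝ)^(γ/2 - c) := by
      rw [hsqrt, ← Real.rpow_sub hn0]
      ring_nf
    have hqge : ε n * min ((n:ℝ)^(γ/2 - c)) 1 / 1250 ≤ q n := by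
      have h1 : ENNReal.ofReal (ε n) * ENNReal.ofReal (min ((n:ℝ)^(-c) / Real.sqrt (1 - ρ n)) 1 / 1250)
          ≤ mixture (ε n) (ρ n) (Aset ((n:ℝ)^(-c))) := by
        calc ENNReal.ofReal (ε n) * ENNReal.ofReal (min ((n:ℝ)^(-c) / Real.sqrt (1 - ρ n)) 1 / 1250)
            ≤ ENNReal.ofReal (ε n) * biNormal (ρ n) (Aset ((n:ℝ)^(-c))) := by
              gcongr
              exact q1_ge _ _ hρ0 hρ1 htpos
          _ ≤ mixture (ε n) (ρ n) (Aset ((n:ℝ)^(-c))) := by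
              rw [mixture]
              simp only [Measure.add_apply, Measure.smul_apply, smul_eq_mul]
              exact le_add_self
      rw [hdiv] at h1
      rw [← ENNReal.ofReal_mul (hε01 n).1] at h1
      have h2 := ENNReal.toReal_mono (measure_ne_top _ _) h1
      have hminn : (0:ℝ) ≤ min ((n:ℝ)^(γ/2 - c)) 1 := le_min (Real.rpow_nonneg hn0.le _) one_pos.le
      rw [ENNReal.toReal_ofReal (mul_nonneg (hε01 n).1 (div_nonneg hminn (by norm_num)))] at h2
      calc ε n * min ((n:ℝ)^(γ/2 - c)) 1 / 1250
          = ε n * (min ((n:ℝ)^(γ/2 - c)) 1 / 1250) := by ring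
        _ ≤ q n := h2
    have hq1 : q n ≤ 1 :=
      ENNReal.toReal_le_of_le_ofReal one_pos.le (by simpa using prob_le_one)
    have hnq : (n:ℝ)^δ/1250 ≤ (n:ℝ) * q n := by
      have hεn : ε n = (n:ℝ)^(-β) := hε n
      have hkey : (n:ℝ)^δ ≤ (n:ℝ) * ((n:ℝ)^(-β) * min ((n:ℝ)^(γ/2 - c)) 1) := by
        have hmul : (n:ℝ) * (n:ℝ)^(-β) = (n:ℝ)^(1-β) := by
          rw [show (1-β : ℝ) = 1 + (-β) by ring, Real.rpow_add hn0, Real.rpow_one]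
        rw [← mul_assoc, hmul]
        rcases le_or_gt c (γ/2) with hcase | hcase
        · have hge1 : (1:ℝ) ≤ (n:ℝ)^(γ/2 - c) :=
            Real.one_le_rpow hn1 (by linarith)
          rw [min_eq_right hge1]
          rw [mul_one]
          exact Real.rpow_le_rpow_of_exponent_le hn1 (min_le_left _ _)
        · have hle1 : (n:ℝ)^(γ/2 - c) ≤ 1 :=
            Real.rpow_le_one_of_one_le_of_nonpos hn1 (by linarith)
          rw [min_eq_left hle1, ← Real.rpow_add hn0]
          apply Real.rpow_le_rpow_of_exponent_le hn1
          have : 1 - β + (γ/2 - c) = (γ - 2*β)/4 := by rw [hc_def]; ring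
          rw [this]
          exact min_le_right _ _
      have hq2 := hqge
      rw [hεn] at hq2
      nlinarith [hq2, mul_le_mul_of_nonneg_left hq2 hn0.le]
    have hterm2 : (1 - q n)^n ≤ Real.exp (-((n:ℝ)^δ/1250)) := by
      have h1q : 0 ≤ 1 - q n := by linarith
      have hexp : 1 - q n ≤ Real.exp (-(q n)) := by
        have := Real.add_one_le_exp (-(q n))
        linarith
      calc (1 - q n)^n ≤ (Real.exp (-(q n)))^n := pow_le_pow_left₀ h1q hexp n
        _ = Real.exp ((n:ℕ) * (-(q n))) := by rw [← Real.exp_nat_mul]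
        _ ≤ Real.exp (-((n:ℝ)^δ/1250)) := by
            apply Real.exp_le_exp.2
            push_cast
            nlinarith
    linarith
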